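/- arXiv:0905.1679 — 5 statements merged into one kernel-verified Lean document; each statement's English description precedes it below -/
import Mathlib

section
/- Let G be a finite connected weighted graph. The integration pairing between harmonic 1-forms and 1-chains, defined by ∫_{e'} de = ℓ(e) if e = e' and 0 otherwise (extended bilinearly), has trivial left kernel on Ω(G), and its right kernel on C_1(G,ℝ) equals im(d). In particular, restricted to Ω(G) × H_1(G,ℝ) it is a perfect pairing, giving an isomorphism H_1(G,ℝ) ≅ Ω(G)*. -/
/-- A finite weighted (multi)graph with a fixed orientation of the edges:
vertex type `V`, edge type `E`, tail/head maps and a positive length function. -/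
structure WGraph where
  V : Type
  E : Type
  [fV : Fintype V]
  [fE : Fintype E]
  [dV : DecidableEq V]
  [dE : DecidableEq E]
  tail : E → V
  head : E → V
  len : E → ℝ
  len_pos : ∀ e, 0 < len e

attribute [instance] WGraph.fV WGraph.fE WGraph.dV WGraph.dE

namespace WGraph

variable (G : WGraph)

/-- Two vertices are adjacent if some edge joins them (in either direction). -/
def Adj (x y : G.V) : Prop :=
  ∃ e, (G.tail e = x ∧ G.head e = y) ∨ (G.tail e = y ∧ G.head e = x)

/-- A weighted graph is connected if any two vertices are joined by a walk. -/
def Connected : Prop := ∀ x y : G.V, Relation.ReflTransGen G.Adj x y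

/-- The differential `d : C_0(G,ℝ) → C_1(G,ℝ)`, `(df)(e) = (f(e⁺) - f(e⁻))/ℓ(e)`. -/
noncomputable def d (f : G.V → ℝ) : G.E → ℝ :=
  fun e => (f (G.head e) - f (G.tail e)) / G.len e

/-- The adjoint `d* : C_1(G,ℝ) → C_0(G,ℝ)`,
`(d*α)(x) = Σ_{e⁺ = x} α(e) - Σ_{e⁻ = x} α(e)`. -/
def dStar (α : G.E → ℝ) : G.V → ℝ := fun x =>
  (∑ e ∈ Finset.univ.filter fun e => G.head e = x, α e) -
    ∑ e ∈ Finset.univ.filter fun e => G.tail e = x, α e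

/-- The inner product `⟨α,β⟩ = Σ_e α(e) β(e) ℓ(e)` on real 1-chains. -/
noncomputable def ip (α β : G.E → ℝ) : ℝ := ∑ e, α e * β e * G.len e

/-- Real 1-cycles: the kernel of `d*`. -/
def IsCycle (α : G.E → ℝ) : Prop := ∀ x, G.dStar α x = 0

/-- Exact 1-chains: the image of `d`. -/
def IsExact (α : G.E → ℝ) : Prop := ∃ f : G.V → ℝ, α = G.d f

/-- A 1-form `ω = Σ ω_e de` (recorded by its coefficients) is harmonic if at every
vertex the incoming and outgoing coefficients sum to the same value. -/
def Harmonic (ω : G.E → ℝ) : Prop :=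
  ∀ x, (∑ e ∈ Finset.univ.filter fun e => G.head e = x, ω e) =
    ∑ e ∈ Finset.univ.filter fun e => G.tail e = x, ω e

/-- Integration of the 1-form `ω` along the 1-chain `α`: `∫_α ω = Σ_e ω_e α(e) ℓ(e)`. -/
noncomputable def intPair (ω α : G.E → ℝ) : ℝ := ∑ e, ω e * α e * G.len e

/-- `d*` on integral 1-chains. -/
def dStarZ (α : G.E → ℤ) : G.V → ℤ := fun x =>
  (∑ e ∈ Finset.univ.filter fun e => G.head e = x, α e) -
    ∑ e ∈ Finset.univ.filter fun e => G.tail e = x, α e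

/-- Integral 1-cycles. -/
def IsCycleZ (α : G.E → ℤ) : Prop := ∀ x, G.dStarZ α x = 0

/-- `α ∈ im(d)_ℤ`: `α` is an integral 1-chain which is the differential of a real
function on the vertices (a function with integer slopes). -/
def IsExactZ (α : G.E → ℤ) : Prop :=
  ∃ f : G.V → ℝ, ∀ e, (α e : ℝ) = G.d f e

/-- The subgroup `H_1(G,ℤ) ⊕ im(d)_ℤ` of `C_1(G,ℤ)`, i.e. the subgroup generated by
integral cycles together with integral exact chains. -/
def jacRel : AddSubgroup (G.E → ℤ) :=
  AddSubgroup.closure {α | G.IsCycleZ α ∨ G.IsExactZ α}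

/-- The Jacobian group of a weighted graph: `J(G) = C_1(G,ℤ)/(H_1(G,ℤ) ⊕ im(d)_ℤ)`. -/
def Jac := (G.E → ℤ) ⧸ G.jacRel

noncomputable instance : AddCommGroup G.Jac :=
  inferInstanceAs (AddCommGroup ((G.E → ℤ) ⧸ G.jacRel))

/-- Divisors of degree zero. -/
def Div0 : AddSubgroup (G.V → ℤ) where
  carrier := {D | ∑ x, D x = 0}
  add_mem' := by
    intro a b ha hb
    simp only [Set.mem_setOf_eq] at *
    simp [Finset.sum_add_distrib, ha, hb]
  zero_mem' := by simp
  neg_mem' := by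
    intro a ha
    simp only [Set.mem_setOf_eq] at *
    simp [ha]

/-- `d*` as a group homomorphism on integral 1-chains. -/
def dStarZHom : (G.E → ℤ) →+ (G.V → ℤ) where
  toFun := G.dStarZ
  map_zero' := by funext x; simp [dStarZ]
  map_add' := by
    intro a b
    funext x
    simp [dStarZ, Finset.sum_add_distrib]
    ring

/-- The subgroup `im(d)_ℤ` of `C_1(G,ℤ)`. -/
def imdZ : AddSubgroup (G.E → ℤ) where
  carrier := {α | G.IsExactZ α}
  add_mem' := by
    rintro a b ⟨f, hf⟩ ⟨g, hg⟩
    exact ⟨f + g, fun e => by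
      simp only [Pi.add_apply, Int.cast_add, hf e, hg e, d]; ring⟩
  zero_mem' := ⟨0, fun e => by simp [d]⟩
  neg_mem' := by
    rintro a ⟨f, hf⟩
    exact ⟨-f, fun e => by
      simp only [Pi.neg_apply, Int.cast_neg, hf e, d]; ring⟩

/-- Principal divisors: `Prin(G) = d*(im(d)_ℤ)`. -/
def Prin : AddSubgroup (G.V → ℤ) := G.imdZ.map G.dStarZHom

lemma sum_dStarZ (α : G.E → ℤ) : ∑ x, G.dStarZ α x = 0 := by
  simp only [dStarZ, Finset.sum_sub_distrib]
  rw [Finset.sum_fiberwise, Finset.sum_fiberwise]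
  simp

/-- The degree-zero Picard group `Pic(G) = Div⁰(G)/Prin(G)`. -/
def PicZ := G.Div0 ⧸ (G.Prin.addSubgroupOf G.Div0)

noncomputable instance : AddCommGroup G.PicZ :=
  inferInstanceAs (AddCommGroup (G.Div0 ⧸ (G.Prin.addSubgroupOf G.Div0)))

/-- The weighted graph obtained by deleting the edge `e₀`. -/
def delEdge (e₀ : G.E) : WGraph where
  V := G.V
  E := {e : G.E // e ≠ e₀}
  tail := fun e => G.tail e.1
  head := fun e => G.head e.1
  len := fun e => G.len e.1
  len_pos := fun e => G.len_pos e.1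

/-- An edge is a bridge if deleting it disconnects the graph. -/
def IsBridge (e₀ : G.E) : Prop := ¬ (G.delEdge e₀).Connected

/-- The weighted graph obtained by deleting a vertex `z` (and all incident edges). -/
def delVertex (z : G.V) : WGraph where
  V := {x : G.V // x ≠ z}
  E := {e : G.E // G.tail e ≠ z ∧ G.head e ≠ z}
  tail := fun e => ⟨G.tail e.1, e.2.1⟩
  head := fun e => ⟨G.head e.1, e.2.2⟩
  len := fun e => G.len e.1
  len_pos := fun e => G.len_pos e.1

open scoped Classical in
/-- The (discrete) potential kernel: `jKer z y` is the function `f` with `f(z) = 0`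
and `Δf = δ_y - δ_z` (when such a function exists; it is unique on a
connected graph). -/
noncomputable def jKer (z y : G.V) : G.V → ℝ :=
  if h : ∃ f : G.V → ℝ, f z = 0 ∧ ∀ w, G.dStar (G.d f) w =
      (if w = y then 1 else 0) - (if w = z then 1 else 0)
  then h.choose else 0

/-- Connectivity using only the edges in `S`. -/
def ConnectedOn (S : Finset G.E) : Prop :=
  ∀ x y : G.V, Relation.ReflTransGen
    (fun a b => ∃ e ∈ S, (G.tail e = a ∧ G.head e = b) ∨ (G.tail e = b ∧ G.head e = a)) x y

/-- A spanning tree: a spanning connected edge set with `#V - 1` edges. -/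
def IsSpanningTree (T : Finset G.E) : Prop :=
  G.ConnectedOn T ∧ T.card + 1 = Fintype.card G.V

/-- The weight `w(T) = Π_{e ∉ T} ℓ(e)` of a spanning tree. -/
noncomputable def wt (T : Finset G.E) : ℝ := ∏ e ∈ Finset.univ \ T, G.len e

open scoped Classical in
/-- `w(G) = Σ_T w(T)`, summed over all spanning trees. -/
noncomputable def wG : ℝ := ∑ T : Finset G.E, if G.IsSpanningTree T then G.wt T else 0

open scoped Classical in
/-- The Foster coefficient `F(e) = (1/w(G)) Σ_{T : e ∉ T} w(T)`. -/
noncomputable def foster (e : G.E) : ℝ :=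
  (1 / G.wG) * ∑ T : Finset G.E, if G.IsSpanningTree T ∧ e ∉ T then G.wt T else 0

open scoped Classical in
/-- The fundamental cycle `α_{T,e}`: the unique 1-cycle supported on `T ∪ {e}` taking
the value `1` on `e`; by convention it is `0` when no such cycle exists
(e.g. when `e ∈ T`). -/
noncomputable def fundCycle (T : Finset G.E) (e : G.E) : G.E → ℝ :=
  if h : ∃ α : G.E → ℝ, G.IsCycle α ∧ α e = 1 ∧ ∀ f, f ∉ T → f ≠ e → α f = 0
  then h.choose else 0

end WGraph

/-! The pairing is the weighted inner product `⟨ω, α⟩ = Σ ω_e α_e ℓ(e)`, which is positive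
definite, and harmonic forms are exactly the cycles `ker d*`. Summation by parts,
`⟨d f, α⟩ = Σ_x f(x) (d*α)(x)`, identifies `ker d*` with `(im d)^⊥`; in finite dimension
`(ker d*)^⊥ = (im d)^⊥⊥ = im d`, which is the right kernel, and the restriction of the form to
`ker d*` stays anisotropic, hence nondegenerate, so it represents every functional on cycles. -/

namespace LinearMap.BilinForm

theorem nondegenerate_of_anisotropic {R M : Type*} [CommSemiring R] [AddCommMonoid M]
    [Module R M] {B : LinearMap.BilinForm R M} (hB : ∀ x, B x x = 0 → x = 0) :
    B.Nondegenerate :=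
  ⟨fun x hx => hB x (hx x), fun y hy => hB y (hy y)⟩

variable {K V : Type*} [Field K] [AddCommGroup V] [Module K V]

theorem exists_mem_forall_eq_of_anisotropic [FiniteDimensional K V] {B : LinearMap.BilinForm K V}
    (hB : ∀ x, B x x = 0 → x = 0) (W : Submodule K V) (φ : Module.Dual K V) :
    ∃ w ∈ W, ∀ v ∈ W, φ v = B w v := by
  have hW : (B.restrict W).Nondegenerate :=
    nondegenerate_of_anisotropic fun x hx => Subtype.ext (hB x hx)
  set w := ((B.restrict W).toDual hW).symm (φ.domRestrict W)
  exact ⟨w, w.2, fun v hv => (apply_toDual_symm_apply (hB := hW) (φ.domRestrict W) ⟨v, hv⟩).symm⟩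

end LinearMap.BilinForm

theorem Finset.sum_mul_sum_fiberwise {ι κ R : Type*} [Fintype ι] [Fintype κ] [DecidableEq κ]
    [NonUnitalNonAssocSemiring R] (g : ι → κ) (f : κ → R) (α : ι → R) :
    ∑ x, f x * ∑ e with g e = x, α e = ∑ e, f (g e) * α e := by
  simp_rw [Finset.mul_sum]
  rw [← Finset.sum_fiberwise Finset.univ g fun e => f (g e) * α e]
  refine Finset.sum_congr rfl fun x _ => Finset.sum_congr rfl fun e he => ?_
  rw [(Finset.mem_filter.1 he).2]

namespace WGraph

variable (G : WGraph)

theorem intPair_comm (ω α : G.E → ℝ) : G.intPair ω α = G.intPair α ω := by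
  simp only [intPair, mul_comm (ω _)]

noncomputable def intPairForm : LinearMap.BilinForm ℝ (G.E → ℝ) :=
  LinearMap.mk₂ ℝ G.intPair
    (fun _ _ _ => by simp only [intPair, Pi.add_apply, add_mul, Finset.sum_add_distrib])
    (fun _ _ _ => by simp only [intPair, Pi.smul_apply, smul_eq_mul, Finset.mul_sum, mul_assoc])
    (fun _ _ _ => by simp only [intPair, Pi.add_apply, mul_add, add_mul, Finset.sum_add_distrib])
    (fun _ _ _ => by
      simp only [intPair, Pi.smul_apply, smul_eq_mul, Finset.mul_sum]
      exact Finset.sum_congr rfl fun _ _ => by ring)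

@[simp]
theorem intPairForm_apply (ω α : G.E → ℝ) : G.intPairForm ω α = G.intPair ω α := rfl

theorem intPairForm_anisotropic (α : G.E → ℝ) (h : G.intPairForm α α = 0) : α = 0 := by
  have hnonneg : ∀ e ∈ Finset.univ, 0 ≤ α e * α e * G.len e := fun e _ =>
    mul_nonneg (mul_self_nonneg _) (G.len_pos e).le
  funext e
  have := (Finset.sum_eq_zero_iff_of_nonneg hnonneg).1 h e (Finset.mem_univ e)
  simpa [(G.len_pos e).ne'] using this

theorem intPairForm_isRefl : G.intPairForm.IsRefl := fun ω α h => by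
  rwa [intPairForm_apply, intPair_comm] at h

noncomputable def dLin : (G.V → ℝ) →ₗ[ℝ] (G.E → ℝ) where
  toFun := G.d
  map_add' f g := by funext e; simp only [d, Pi.add_apply]; ring
  map_smul' c f := by funext e; simp only [d, Pi.smul_apply, smul_eq_mul, RingHom.id_apply]; ring

theorem isExact_iff_mem_range_dLin (α : G.E → ℝ) : G.IsExact α ↔ α ∈ LinearMap.range G.dLin :=
  exists_congr fun _ => eq_comm

noncomputable def dStarLin : (G.E → ℝ) →ₗ[ℝ] (G.V → ℝ) where
  toFun := G.dStar
  map_add' α β := by funext x; simp only [dStar, Pi.add_apply, Finset.sum_add_distrib]; ring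
  map_smul' c α := by
    funext x; simp only [dStar, Pi.smul_apply, smul_eq_mul, RingHom.id_apply, ← Finset.mul_sum]; ring

noncomputable abbrev cycleSpace : Submodule ℝ (G.E → ℝ) := LinearMap.ker G.dStarLin

theorem mem_cycleSpace_iff (α : G.E → ℝ) : α ∈ G.cycleSpace ↔ G.IsCycle α :=
  funext_iff

theorem harmonic_iff_isCycle (ω : G.E → ℝ) : G.Harmonic ω ↔ G.IsCycle ω :=
  forall_congr' fun _ => sub_eq_zero.symm

theorem intPair_d_left (f : G.V → ℝ) (α : G.E → ℝ) :
    G.intPair (G.d f) α = ∑ x, f x * G.dStar α x := by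
  simp only [dStar, mul_sub, Finset.sum_sub_distrib, Finset.sum_mul_sum_fiberwise]
  rw [← Finset.sum_sub_distrib]
  refine Finset.sum_congr rfl fun e _ => ?_
  rw [d]
  field_simp [(G.len_pos e).ne']

theorem isCycle_iff_forall_intPair_d (α : G.E → ℝ) :
    G.IsCycle α ↔ ∀ f, G.intPair (G.d f) α = 0 := by
  simp only [intPair_d_left]
  refine ⟨fun h f => Finset.sum_eq_zero fun x _ => by rw [h x, mul_zero], fun h x => ?_⟩
  simpa [Pi.single_apply] using h (Pi.single x 1)

theorem orthogonal_range_dLin :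
    G.intPairForm.orthogonal (LinearMap.range G.dLin) = G.cycleSpace := by
  ext α
  simp only [LinearMap.BilinForm.mem_orthogonal_iff, LinearMap.mem_range, forall_exists_index,
    forall_apply_eq_imp_iff, intPairForm_apply, mem_cycleSpace_iff,
    isCycle_iff_forall_intPair_d]
  rfl

theorem orthogonal_cycleSpace :
    G.intPairForm.orthogonal G.cycleSpace = LinearMap.range G.dLin := by
  rw [← orthogonal_range_dLin, LinearMap.BilinForm.orthogonal_orthogonal
    (LinearMap.BilinForm.nondegenerate_of_anisotropic G.intPairForm_anisotropic)
    G.intPairForm_isRefl]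

end WGraph

theorem integration_pairing_perfect_general (G : WGraph) :
    (∀ ω : G.E → ℝ, G.Harmonic ω → (∀ α : G.E → ℝ, G.intPair ω α = 0) → ω = 0) ∧
    (∀ α : G.E → ℝ, (∀ ω : G.E → ℝ, G.Harmonic ω → G.intPair ω α = 0) ↔ G.IsExact α) ∧
    (∀ α : G.E → ℝ, G.IsCycle α → (∀ ω : G.E → ℝ, G.Harmonic ω → G.intPair ω α = 0) →
      α = 0) ∧
    (∀ φ : (G.E → ℝ) →ₗ[ℝ] ℝ, ∃ α : G.E → ℝ, G.IsCycle α ∧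
      ∀ ω : G.E → ℝ, G.Harmonic ω → φ ω = G.intPair ω α) := by
  have hharm (ω : G.E → ℝ) : G.Harmonic ω ↔ ω ∈ G.cycleSpace := by
    rw [G.mem_cycleSpace_iff, G.harmonic_iff_isCycle]
  refine ⟨fun ω _ h => G.intPairForm_anisotropic ω (h ω), fun α => ?_,
    fun α hα h => G.intPairForm_anisotropic α (h α ((G.harmonic_iff_isCycle α).2 hα)), fun φ => ?_⟩
  · rw [G.isExact_iff_mem_range_dLin, ← G.orthogonal_cycleSpace,
      LinearMap.BilinForm.mem_orthogonal_iff]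
    simp only [← hharm, WGraph.intPairForm_apply]
  · obtain ⟨α, hα, hφ⟩ := LinearMap.BilinForm.exists_mem_forall_eq_of_anisotropic
      G.intPairForm_anisotropic G.cycleSpace φ
    refine ⟨α, (G.mem_cycleSpace_iff α).1 hα, fun ω hω => ?_⟩
    rw [hφ ω ((hharm ω).1 hω), WGraph.intPairForm_apply, G.intPair_comm]

/-- The integration pairing `∫_α ω = Σ_e ω_e α(e) ℓ(e)` between
harmonic 1-forms and 1-chains has trivial left kernel, right kernel `im(d)`, and
restricted to `Ω(G) × H₁(G,ℝ)` it is a perfect pairing: it is nondegenerate in the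
second variable on cycles, and every linear functional on 1-forms is represented on
`Ω(G)` by integration against some cycle. -/
theorem integration_pairing_perfect (G : WGraph) (hG : G.Connected) :
    (∀ ω : G.E → ℝ, G.Harmonic ω → (∀ α : G.E → ℝ, G.intPair ω α = 0) → ω = 0) ∧
    (∀ α : G.E → ℝ, (∀ ω : G.E → ℝ, G.Harmonic ω → G.intPair ω α = 0) ↔ G.IsExact α) ∧
    (∀ α : G.E → ℝ, G.IsCycle α → (∀ ω : G.E → ℝ, G.Harmonic ω → G.intPair ω α = 0) →
      α = 0) ∧
    (∀ φ : (G.E → ℝ) →ₗ[ℝ] ℝ, ∃ α : G.E → ℝ, G.IsCycle α ∧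
      ∀ ω : G.E → ℝ, G.Harmonic ω → φ ω = G.intPair ω α) :=
  integration_pairing_perfect_general G
end

section
/- Let G be a finite connected weighted graph. The map d*: C_1(G,ℤ) → Div^0(G) is surjective, and its kernel restricted to H_1(G,ℤ) ⊕ im(d)_ℤ induces an isomorphism h: J(G) → Pic(G), where J(G) = C_1(G,ℤ)/(H_1(G,ℤ) ⊕ im(d)_ℤ) and Pic(G) = Div^0(G)/Prin(G). -/
namespace WGraph

variable (G : WGraph)

lemma dStarZHom_apply (α : G.E → ℤ) : G.dStarZHom α = G.dStarZ α := rfl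

lemma dStarZ_single (e : G.E) :
    G.dStarZ (fun e' => if e' = e then (1:ℤ) else 0) =
      fun w => (if G.head e = w then (1:ℤ) else 0) - (if G.tail e = w then 1 else 0) := by
  funext w
  simp [dStarZ, Finset.sum_ite_eq', Finset.mem_filter]

lemma surj_delta (hG : G.Connected) (x y : G.V) :
    ∃ α : G.E → ℤ, G.dStarZ α =
      fun w => (if y = w then (1:ℤ) else 0) - (if x = w then 1 else 0) := by
  have h := hG x y
  induction h with
  | refl => exact ⟨0, by funext w; simp [dStarZ]⟩
  | @tail b c hxb hbc ih =>
    obtain ⟨α, hα⟩ := ih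
    obtain ⟨e, he | he⟩ := hbc
    · refine ⟨α + fun e' => if e' = e then 1 else 0, ?_⟩
      funext w
      have h1 := congrFun (G.dStarZHom.map_add α (fun e' => if e' = e then (1:ℤ) else 0)) w
      simp only [dStarZHom_apply, Pi.add_apply] at h1
      rw [h1, hα, congrFun (G.dStarZ_single e) w, he.1, he.2]
      ring
    · refine ⟨α - fun e' => if e' = e then 1 else 0, ?_⟩
      funext w
      have h1 := congrFun (G.dStarZHom.map_sub α (fun e' => if e' = e then (1:ℤ) else 0)) w
      simp only [dStarZHom_apply, Pi.sub_apply] at h1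
      rw [h1, hα, congrFun (G.dStarZ_single e) w, he.1, he.2]
      ring

lemma dStarZ_surj (hG : G.Connected) :
    ∀ D : G.V → ℤ, D ∈ G.Div0 → ∃ α : G.E → ℤ, G.dStarZ α = D := by
  intro D hD
  have hD' : ∑ x, D x = 0 := hD
  rcases isEmpty_or_nonempty G.V with hV | hV
  · exact ⟨0, funext fun x => (hV.false x).elim⟩
  · obtain ⟨x0⟩ := hV
    choose A hA using fun y => G.surj_delta hG x0 y
    refine ⟨∑ y, D y • A y, ?_⟩
    have hmap : G.dStarZ (∑ y, D y • A y) = ∑ y, D y • G.dStarZ (A y) := by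
      rw [← dStarZHom_apply, map_sum]
      refine Finset.sum_congr rfl fun y _ => ?_
      rw [map_zsmul, dStarZHom_apply]
    funext w
    rw [hmap]
    simp only [Finset.sum_apply, Pi.smul_apply, hA, Pi.sub_apply, smul_eq_mul, mul_sub,
      mul_ite, mul_one, mul_zero, Finset.sum_sub_distrib]
    by_cases hw : x0 = w <;>
      simp [hw, Finset.sum_ite_eq', hD']

end WGraph

/-- `d* : C₁(G,ℤ) → Div⁰(G)` is surjective and induces an
isomorphism `h : J(G) = C₁(G,ℤ)/(H₁(G,ℤ) ⊕ im(d)_ℤ) → Pic(G) = Div⁰(G)/Prin(G)`. -/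
theorem jacobian_iso_picard (G : WGraph) (hG : G.Connected) :
    (∀ D : G.V → ℤ, D ∈ G.Div0 → ∃ α : G.E → ℤ, G.dStarZ α = D) ∧
    ∃ h : G.Jac ≃+ G.PicZ, ∀ α : G.E → ℤ,
      h (QuotientAddGroup.mk α) =
        QuotientAddGroup.mk (⟨G.dStarZ α, G.sum_dStarZ α⟩ : G.Div0) := by
  have hsurj := G.dStarZ_surj hG
  refine ⟨hsurj, ?_⟩
  -- the map to Div0
  let φ : (G.E → ℤ) →+ G.Div0 :=
    { toFun := fun α => ⟨G.dStarZ α, G.sum_dStarZ α⟩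
      map_zero' := Subtype.ext (funext fun x => by simp [WGraph.dStarZ])
      map_add' := fun a b => Subtype.ext (funext fun x =>
        congrFun (G.dStarZHom.map_add a b) x) }
  let ψ : (G.E → ℤ) →+ G.PicZ :=
    (QuotientAddGroup.mk' (G.Prin.addSubgroupOf G.Div0)).comp φ
  have hψ : Function.Surjective ψ := by
    intro p
    obtain ⟨D, rfl⟩ := QuotientAddGroup.mk'_surjective _ p
    obtain ⟨α, hα⟩ := hsurj D.1 D.2
    exact ⟨α, congrArg _ (Subtype.ext hα)⟩
  have hker : G.jacRel = ψ.ker := by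
    apply le_antisymm
    · refine (AddSubgroup.closure_le _).mpr ?_
      rintro α (hc | he)
      · have hφ : φ α = 0 := Subtype.ext (funext fun x => hc x)
        simp only [SetLike.mem_coe, AddMonoidHom.mem_ker, ψ]
        show (QuotientAddGroup.mk' (G.Prin.addSubgroupOf G.Div0)) (φ α) = 0
        rw [hφ, map_zero]
      · simp only [SetLike.mem_coe, AddMonoidHom.mem_ker, ψ, AddMonoidHom.comp_apply]
        exact (QuotientAddGroup.eq_zero_iff (φ α)).mpr
          ((AddSubgroup.mem_addSubgroupOf).mpr (AddSubgroup.mem_map.mpr ⟨α, he, rfl⟩))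
    · intro α hα
      rw [AddMonoidHom.mem_ker] at hα
      have hα2 : (φ α : G.V → ℤ) ∈ G.Prin :=
        (AddSubgroup.mem_addSubgroupOf).mp ((QuotientAddGroup.eq_zero_iff (φ α)).mp hα)
      obtain ⟨β, hβ, hβα⟩ := AddSubgroup.mem_map.mp hα2
      have hβα' : G.dStarZ β = G.dStarZ α := hβα
      have hcyc : G.IsCycleZ (α - β) := by
        intro x
        have h1 := congrFun (G.dStarZHom.map_sub α β) x
        simp only [WGraph.dStarZHom_apply, Pi.sub_apply] at h1
        rw [h1, hβα']
        ring
      have hsplit : α = (α - β) + β := by ring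
      rw [hsplit]
      exact AddSubgroup.add_mem _ (AddSubgroup.subset_closure (Or.inl hcyc))
        (AddSubgroup.subset_closure (Or.inr hβ))
  let e1 : G.Jac ≃+ ((G.E → ℤ) ⧸ ψ.ker) := QuotientAddGroup.quotientAddEquivOfEq hker
  let e2 : ((G.E → ℤ) ⧸ ψ.ker) ≃+ G.PicZ :=
    QuotientAddGroup.quotientKerEquivOfSurjective ψ hψ
  exact ⟨e1.trans e2, fun α => rfl⟩
end

section
/- Let G be the weighted graph with two vertices x, y and two parallel edges e₁, e₂ both oriented from x to y, with lengths r and 1−r where 0 < r < 1. Then the Jacobian J(G) is isomorphic to ℤ if r is irrational, and isomorphic to ℤ/nℤ if r = m/n with gcd(m,n) = 1. -/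
/-- The weighted graph with two vertices `x = 0`, `y = 1` and two parallel edges,
both oriented from `x` to `y`, of lengths `r` and `1 - r`. -/
def twoEdgeGraph (r : ℝ) (h0 : 0 < r) (h1 : r < 1) : WGraph where
  V := Fin 2
  E := Fin 2
  tail := fun _ => 0
  head := fun _ => 1
  len := fun e => if e = 0 then r else 1 - r
  len_pos := by
    intro e
    show 0 < (if e = 0 then r else 1 - r)
    split
    · exact h0
    · linarith

/-! Every edge runs from `0` to `1`, so the integral cycles are the chains with total
`α₀ + α₁ = 0`, and `α` is exact iff both edges carry the same potential difference,
`α₀ r = α₁ (1 - r)`, i.e. `(α₀ + α₁) r = α₁`. Modulo cycles a chain is determined by its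
total `s`, and a chain of total `s` is congruent to an exact one iff `s r ∈ ℤ`. Hence
`J(G) ≅ ℤ / {s | s • r = 0 in ℝ/ℤ} ≅ ZMod (addOrderOf r)`, and the order of `r` in `ℝ/ℤ` is
`0` (so `ZMod 0 = ℤ`) for irrational `r` and `n` for `r = m/n` in lowest terms. -/

namespace WGraph

def chainSum (G : WGraph) : (G.E → ℤ) →+ ℤ :=
  AddMonoidHom.mk' (fun α => ∑ e, α e) fun _ _ => Finset.sum_add_distrib

theorem chainSum_surjective (G : WGraph) (e : G.E) : Function.Surjective G.chainSum :=
  fun k => ⟨Pi.single e k, by simp [chainSum]⟩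

section Parallel

variable {G : WGraph} {x y : G.V} (hxy : x ≠ y) (htail : ∀ e, G.tail e = x)
  (hhead : ∀ e, G.head e = y)
include hxy htail hhead

theorem isCycleZ_iff_chainSum_eq_zero_of_parallel {α : G.E → ℤ} :
    G.IsCycleZ α ↔ G.chainSum α = 0 := by
  have hdStar : ∀ v, G.dStarZ α v =
      (if y = v then G.chainSum α else 0) - if x = v then G.chainSum α else 0 := by
    intro v
    by_cases hy : y = v <;> by_cases hx : x = v <;>
      simp [dStarZ, chainSum, htail, hhead, hx, hy]
  refine ⟨fun h => ?_, fun h v => by simp [hdStar, h]⟩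
  simpa [hdStar, hxy] using h y

theorem isExactZ_iff_of_parallel {α : G.E → ℤ} :
    G.IsExactZ α ↔ ∃ c : ℝ, ∀ e, α e * G.len e = c := by
  constructor
  · rintro ⟨f, hf⟩
    refine ⟨f y - f x, fun e => ?_⟩
    rw [hf e, d, htail, hhead, div_mul_cancel₀ _ (G.len_pos e).ne']
  · rintro ⟨c, hc⟩
    refine ⟨fun v => if v = y then c else 0, fun e => ?_⟩
    rw [d, htail, hhead, if_pos rfl, if_neg hxy, sub_zero, ← hc e,
      mul_div_cancel_right₀ _ (G.len_pos e).ne']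

end Parallel

end WGraph

theorem ker_zmultiplesHom_comp {A M : Type*} [AddGroup A] [AddGroup M] (g : A) (f : M →+ ℤ) :
    ((zmultiplesHom A g).comp f).ker = ((Int.castAddHom (ZMod (addOrderOf g))).comp f).ker := by
  ext α
  rw [AddMonoidHom.mem_ker, AddMonoidHom.mem_ker, AddMonoidHom.comp_apply, zmultiplesHom_apply,
    ← addOrderOf_dvd_iff_zsmul_eq_zero, AddMonoidHom.comp_apply, Int.coe_castAddHom,
    ZMod.intCast_zmod_eq_zero_iff_dvd]

theorem zsmul_coe_eq_zero_iff (s : ℤ) (r : ℝ) :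
    s • (r : UnitAddCircle) = 0 ↔ ∃ z : ℤ, (z : ℝ) = s * r := by
  rw [← AddCircle.coe_zsmul, AddCircle.coe_eq_zero_iff]
  simp [zsmul_eq_mul]

theorem addOrderOf_coe_eq_zero_of_irrational {r : ℝ} (hr : Irrational r) :
    addOrderOf (r : UnitAddCircle) = 0 := by
  rw [addOrderOf_eq_zero_iff, AddCircle.not_isOfFinAddOrder_iff_forall_rat_ne_div, div_one]
  exact fun q hq => hr ⟨q, hq⟩

section TwoEdgeGraph

variable {r : ℝ} {h0 : 0 < r} {h1 : r < 1}

theorem chainSum_twoEdgeGraph (α : (twoEdgeGraph r h0 h1).E → ℤ) :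
    (twoEdgeGraph r h0 h1).chainSum α = α (0 : Fin 2) + α (1 : Fin 2) :=
  Fin.sum_univ_two _

theorem isCycleZ_twoEdgeGraph_iff {α : (twoEdgeGraph r h0 h1).E → ℤ} :
    (twoEdgeGraph r h0 h1).IsCycleZ α ↔ (twoEdgeGraph r h0 h1).chainSum α = 0 :=
  WGraph.isCycleZ_iff_chainSum_eq_zero_of_parallel (x := (0 : Fin 2)) (y := (1 : Fin 2))
    Fin.zero_ne_one (fun _ => rfl) (fun _ => rfl)

theorem isExactZ_twoEdgeGraph_iff {α : (twoEdgeGraph r h0 h1).E → ℤ} :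
    (twoEdgeGraph r h0 h1).IsExactZ α ↔ (α (0 : Fin 2) : ℝ) * r = α (1 : Fin 2) * (1 - r) := by
  rw [WGraph.isExactZ_iff_of_parallel (x := (0 : Fin 2)) (y := (1 : Fin 2))
    Fin.zero_ne_one (fun _ => rfl) (fun _ => rfl)]
  constructor
  · rintro ⟨c, hc⟩
    exact (hc (0 : Fin 2)).trans (hc (1 : Fin 2)).symm
  · intro h
    exact ⟨_, Fin.forall_fin_two.2 ⟨h, rfl⟩⟩

theorem jacRel_twoEdgeGraph_le : (twoEdgeGraph r h0 h1).jacRel ≤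
    ((zmultiplesHom UnitAddCircle (r : UnitAddCircle)).comp (twoEdgeGraph r h0 h1).chainSum).ker := by
  refine (AddSubgroup.closure_le _).2 ?_
  rintro α (hα | hα)
  · simp [isCycleZ_twoEdgeGraph_iff.1 hα]
  · have hrel := isExactZ_twoEdgeGraph_iff.1 hα
    rw [SetLike.mem_coe, AddMonoidHom.mem_ker, AddMonoidHom.comp_apply, zmultiplesHom_apply,
      zsmul_coe_eq_zero_iff, chainSum_twoEdgeGraph]
    exact ⟨α (1 : Fin 2), by push_cast; linarith⟩

theorem ker_le_jacRel_twoEdgeGraph :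
    ((zmultiplesHom UnitAddCircle (r : UnitAddCircle)).comp (twoEdgeGraph r h0 h1).chainSum).ker ≤
      (twoEdgeGraph r h0 h1).jacRel := by
  intro α hα
  rw [AddMonoidHom.mem_ker, AddMonoidHom.comp_apply, zmultiplesHom_apply,
    zsmul_coe_eq_zero_iff] at hα
  obtain ⟨z, hz⟩ := hα
  set s := (twoEdgeGraph r h0 h1).chainSum α
  -- the exact chain with total `s`: the potential difference `z (1 - r) = (s - z) r` is shared
  let β : (twoEdgeGraph r h0 h1).E → ℤ := ![s - z, z]
  have hβ : (twoEdgeGraph r h0 h1).IsExactZ β := by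
    rw [isExactZ_twoEdgeGraph_iff]
    simp only [β, Matrix.cons_val_zero, Matrix.cons_val_one, Int.cast_sub]
    linarith
  have hαβ : (twoEdgeGraph r h0 h1).IsCycleZ (α - β) := by
    rw [isCycleZ_twoEdgeGraph_iff, map_sub, chainSum_twoEdgeGraph β]
    simp [β, s]
  have hβ_mem : β ∈ (twoEdgeGraph r h0 h1).jacRel := AddSubgroup.subset_closure (Or.inr hβ)
  have hαβ_mem : α - β ∈ (twoEdgeGraph r h0 h1).jacRel :=
    AddSubgroup.subset_closure (Or.inl hαβ)
  simpa using add_mem hβ_mem hαβ_mem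

variable (r h0 h1) in
noncomputable def twoEdgeGraphJacEquiv :
    (twoEdgeGraph r h0 h1).Jac ≃+ ZMod (addOrderOf (r : UnitAddCircle)) :=
  (QuotientAddGroup.quotientAddEquivOfEq
      ((jacRel_twoEdgeGraph_le.antisymm ker_le_jacRel_twoEdgeGraph).trans
        (ker_zmultiplesHom_comp _ _))).trans
    (QuotientAddGroup.quotientKerEquivOfSurjective _
      (ZMod.intCast_surjective.comp ((twoEdgeGraph r h0 h1).chainSum_surjective (0 : Fin 2))))

end TwoEdgeGraph

/-- For the two-vertex banana graph with edge lengths `r` and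
`1 - r` (`0 < r < 1`): the Jacobian is `ℤ` if `r` is irrational, and `ℤ/nℤ` if
`r = m/n` in lowest terms. -/
theorem jacobian_twoEdgeGraph (r : ℝ) (h0 : 0 < r) (h1 : r < 1) :
    (Irrational r → Nonempty ((twoEdgeGraph r h0 h1).Jac ≃+ ℤ)) ∧
    (∀ m n : ℕ, 0 < n → Nat.Coprime m n → r = (m : ℝ) / n →
      Nonempty ((twoEdgeGraph r h0 h1).Jac ≃+ ZMod n)) := by
  refine ⟨fun hr => ?_, fun m n hn hmn hr => ?_⟩
  · have e := twoEdgeGraphJacEquiv r h0 h1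
    rw [addOrderOf_coe_eq_zero_of_irrational hr] at e
    exact ⟨e⟩
  · have hord : addOrderOf (r : UnitAddCircle) = n := by
      rw [hr, ← mul_one ((m : ℝ) / n), AddCircle.addOrderOf_div_of_gcd_eq_one hn hmn]
    have e := twoEdgeGraphJacEquiv r h0 h1
    rw [hord] at e
    exact ⟨e⟩
end

section
/- Let G be a weighted cycle graph with n+1 vertices and n+1 edges arranged in a single directed cycle with edge lengths ℓ₀, …, ℓ_n satisfying Σ ℓ_j = 1. Then J(G) is isomorphic to the subgroup (ℤℓ₀ + ⋯ + ℤℓ_n)/ℤ of ℝ/ℤ. In particular, if ℓ₀, …, ℓ_n are all rational then J(G) is finite, and if ℓ₀, …, ℓ_n are ℚ-linearly independent then J(G) is free abelian of rank n. -/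
/-- The weighted cycle graph on `n+1` vertices, oriented cyclically, with edge `i`
going from vertex `i` to vertex `i+1` and having length `ℓ i`. -/
def cycleGraph (n : ℕ) (ℓ : Fin (n + 1) → ℝ) (hpos : ∀ i, 0 < ℓ i) : WGraph where
  V := Fin (n + 1)
  E := Fin (n + 1)
  tail := id
  head := fun i => i + 1
  len := ℓ
  len_pos := hpos


/-!
On a cycle the integral 1-cycles are the constant chains `m • (1, …, 1)`, and a function on
`ℤ/(n+1)` is a discrete derivative `i ↦ f (i + 1) - f i` iff it sums to zero, so an integral
chain `α` is exact iff `Σ αᵢ ℓᵢ = 0`. Since `Σ ℓᵢ = 1`, the relation subgroup `H₁ ⊕ im(d)_ℤ` is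
therefore the kernel of `α ↦ Σ αᵢ ℓᵢ mod 1`, whose image is `(ℤℓ₀ + ⋯ + ℤℓₙ)/ℤ`. Rational
lengths make this image a finitely generated torsion group; `ℚ`-independent lengths make the
kernel just the constant chains, leaving `ℤⁿ⁺¹/ℤ(1, …, 1) ≅ ℤⁿ`.
-/

open WGraph

section CyclicDifferences

variable {n : ℕ}

theorem Fin.apply_eq_apply_zero_of_forall_apply_add_one {α : Sort*} {g : Fin (n + 1) → α}
    (h : ∀ i, g (i + 1) = g i) (i : Fin (n + 1)) : g i = g 0 := by
  induction i using Fin.induction with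
  | zero => rfl
  | succ i ih => rw [← Fin.coeSucc_eq_succ, h, ih]

theorem Fin.exists_sub_eq_iff_sum_eq_zero {M : Type*} [AddCommGroup M] (g : Fin (n + 1) → M) :
    (∃ f : Fin (n + 1) → M, ∀ i, g i = f (i + 1) - f i) ↔ ∑ i, g i = 0 := by
  constructor
  · rintro ⟨f, hf⟩
    rw [Finset.sum_congr rfl fun i _ => hf i, Finset.sum_sub_distrib, sub_eq_zero]
    exact Equiv.sum_comp (Equiv.addRight 1) f
  · intro hg
    refine ⟨fun i => Fin.partialSum g i.castSucc, fun i => ?_⟩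
    induction i using Fin.lastCases with
    | last =>
      have htotal : Fin.partialSum g (Fin.last n).succ = 0 := by
        rw [Fin.partialSum, List.take_of_length_le (by simp), List.sum_ofFn, hg]
      rw [Fin.partialSum_succ] at htotal
      simp only [Fin.last_add_one, Fin.castSucc_zero, Fin.partialSum_zero]
      rw [zero_sub, eq_neg_iff_add_eq_zero, add_comm, htotal]
    | cast i =>
      dsimp only
      rw [Fin.coeSucc_eq_succ, ← Fin.succ_castSucc, Fin.partialSum_succ, add_sub_cancel_left]

end CyclicDifferences

namespace cycleGraph

variable {n : ℕ} {ℓ : Fin (n + 1) → ℝ} {hpos : ∀ i, 0 < ℓ i}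

theorem dStarZ_apply (α : Fin (n + 1) → ℤ) (x : Fin (n + 1)) :
    (cycleGraph n ℓ hpos).dStarZ α x = α (x - 1) - α x := by
  have hin : (Finset.univ.filter fun e : Fin (n + 1) => e + 1 = x) = {x - 1} := by
    ext e; simp [eq_sub_iff_add_eq]
  have hout : (Finset.univ.filter fun e : Fin (n + 1) => e = x) = {x} := by
    ext e; simp
  change (∑ e ∈ Finset.univ.filter fun e : Fin (n + 1) => e + 1 = x, α e) -
      ∑ e ∈ Finset.univ.filter fun e : Fin (n + 1) => e = x, α e = _
  rw [hin, hout, Finset.sum_singleton, Finset.sum_singleton]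

theorem isCycleZ_iff (α : Fin (n + 1) → ℤ) :
    (cycleGraph n ℓ hpos).IsCycleZ α ↔ ∃ m : ℤ, ∀ i, α i = m := by
  constructor
  · intro h
    refine ⟨α 0, Fin.apply_eq_apply_zero_of_forall_apply_add_one fun i => ?_⟩
    have := (dStarZ_apply (hpos := hpos) α (i + 1)).symm.trans (h (i + 1))
    rwa [add_sub_cancel_right, sub_eq_zero, eq_comm] at this
  · rintro ⟨m, hm⟩ (x : Fin (n + 1))
    exact (dStarZ_apply α x).trans (by rw [hm, hm, sub_self])

theorem isExactZ_iff (α : Fin (n + 1) → ℤ) :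
    (cycleGraph n ℓ hpos).IsExactZ α ↔ ∑ i, (α i : ℝ) * ℓ i = 0 := by
  rw [← Fin.exists_sub_eq_iff_sum_eq_zero]
  exact exists_congr fun f => forall_congr' fun e => eq_div_iff (hpos e).ne'

end cycleGraph

section CirclePairing

variable {ι : Type*} [Fintype ι] (ℓ : ι → ℝ)

noncomputable def circlePairing : (ι → ℤ) →+ AddCircle (1 : ℝ) :=
  (Fintype.linearCombination ℤ fun i => (ℓ i : AddCircle (1 : ℝ))).toAddMonoidHom

theorem circlePairing_apply (α : ι → ℤ) :
    circlePairing ℓ α = ((∑ i, (α i : ℝ) * ℓ i : ℝ) : AddCircle (1 : ℝ)) := by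
  simp [circlePairing, Fintype.linearCombination_apply, ← zsmul_eq_mul]

theorem range_circlePairing :
    (circlePairing ℓ).range =
      AddSubgroup.closure (Set.range fun i => (ℓ i : AddCircle (1 : ℝ))) := by
  rw [← Submodule.span_int_eq_addSubgroupClosure, ← Fintype.range_linearCombination]
  rfl

theorem mem_ker_circlePairing {α : ι → ℤ} :
    α ∈ (circlePairing ℓ).ker ↔ ∃ m : ℤ, ∑ i, (α i : ℝ) * ℓ i = m := by
  rw [AddMonoidHom.mem_ker, circlePairing_apply, AddCircle.coe_eq_zero_iff]
  simp [zsmul_eq_mul, eq_comm]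

variable {ℓ}

theorem mem_ker_circlePairing_iff_sub_const (hsum : ∑ i, ℓ i = 1) {α : ι → ℤ} :
    α ∈ (circlePairing ℓ).ker ↔ ∃ m : ℤ, ∑ i, ((α i - m : ℤ) : ℝ) * ℓ i = 0 := by
  rw [mem_ker_circlePairing]
  refine exists_congr fun m => ?_
  push_cast
  simp only [sub_mul, Finset.sum_sub_distrib, ← Finset.mul_sum, hsum, mul_one, sub_eq_zero]

theorem mem_ker_circlePairing_iff_of_linearIndependent (hsum : ∑ i, ℓ i = 1)
    (hli : LinearIndependent ℚ ℓ) {α : ι → ℤ} :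
    α ∈ (circlePairing ℓ).ker ↔ ∃ m : ℤ, ∀ i, α i = m := by
  rw [mem_ker_circlePairing_iff_sub_const hsum]
  refine exists_congr fun m => ⟨fun h i => ?_, fun h => by simp [h]⟩
  have := Fintype.linearIndependent_iff.mp (hli.restrict_scalars' ℤ) (fun i => α i - m)
    (by simpa [zsmul_eq_mul] using h) i
  exact sub_eq_zero.mp this

end CirclePairing

theorem AddSubgroup.finite_closure_of_isOfFinAddOrder {G : Type*} [AddCommGroup G] {s : Set G}
    [Finite s] (hs : ∀ x ∈ s, IsOfFinAddOrder x) : Finite (AddSubgroup.closure s) := by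
  have hle : AddSubgroup.closure s ≤ AddCommGroup.torsion G :=
    (AddSubgroup.closure_le _).mpr hs
  exact AddCommGroup.finite_of_fg_isAddTorsion _ fun x =>
    (AddSubmonoid.isOfFinAddOrder_coe).mp (hle x.2)

def Fin.subLastHom (n : ℕ) (M : Type*) [AddCommGroup M] : (Fin (n + 1) → M) →+ (Fin n → M) :=
  AddMonoidHom.mk' (fun α i => α i.castSucc - α (Fin.last n)) fun α β => by
    ext i; simp only [Pi.add_apply]; abel

theorem Fin.mem_ker_subLastHom {n : ℕ} {M : Type*} [AddCommGroup M] {α : Fin (n + 1) → M} :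
    α ∈ (Fin.subLastHom n M).ker ↔ ∃ m : M, ∀ i, α i = m := by
  rw [AddMonoidHom.mem_ker]
  constructor
  · intro h
    refine ⟨α (Fin.last n), fun i => ?_⟩
    induction i using Fin.lastCases with
    | last => rfl
    | cast i => exact sub_eq_zero.mp (congrFun h i)
  · rintro ⟨m, hm⟩
    ext i
    simp [Fin.subLastHom, hm]

theorem Fin.subLastHom_surjective (n : ℕ) (M : Type*) [AddCommGroup M] :
    Function.Surjective (Fin.subLastHom n M) := fun v =>
  ⟨Fin.snoc v 0, funext fun i => by simp [Fin.subLastHom]⟩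

namespace WGraph

variable {G : WGraph} {H : Type*} [AddGroup H]

noncomputable def jacAddEquivRange (f : (G.E → ℤ) →+ H) (h : G.jacRel = f.ker) :
    G.Jac ≃+ f.range :=
  (QuotientAddGroup.quotientAddEquivOfEq h).trans (QuotientAddGroup.quotientKerEquivRange f)

noncomputable def jacAddEquivOfSurjective (f : (G.E → ℤ) →+ H) (h : G.jacRel = f.ker)
    (hf : Function.Surjective f) : G.Jac ≃+ H :=
  (QuotientAddGroup.quotientAddEquivOfEq h).trans
    (QuotientAddGroup.quotientKerEquivOfSurjective f hf)

end WGraph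

namespace cycleGraph

variable {n : ℕ} {ℓ : Fin (n + 1) → ℝ} {hpos : ∀ i, 0 < ℓ i}

theorem jacRel_eq (hsum : ∑ i, ℓ i = 1) :
    (cycleGraph n ℓ hpos).jacRel = (circlePairing ℓ).ker := by
  apply le_antisymm
  · refine (AddSubgroup.closure_le _).mpr ?_
    rintro α (hcycle | hexact)
    · obtain ⟨m, hm⟩ := (isCycleZ_iff α).mp hcycle
      exact (mem_ker_circlePairing_iff_sub_const hsum).mpr ⟨m, by simp [hm]⟩
    · exact (mem_ker_circlePairing ℓ).mpr ⟨0, by simpa using (isExactZ_iff α).mp hexact⟩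
  · intro α hα
    obtain ⟨m, hm⟩ := (mem_ker_circlePairing_iff_sub_const hsum).mp hα
    have hcycle : (cycleGraph n ℓ hpos).IsCycleZ fun _ => m :=
      (isCycleZ_iff _).mpr ⟨m, fun _ => rfl⟩
    have hexact : (cycleGraph n ℓ hpos).IsExactZ (α - fun _ => m) :=
      (isExactZ_iff (α - fun _ => m)).mpr hm
    rw [← add_sub_cancel (fun _ => m) α]
    exact add_mem (AddSubgroup.subset_closure (Or.inl hcycle))
      (AddSubgroup.subset_closure (Or.inr hexact))

noncomputable def jacAddEquivClosure (hsum : ∑ i, ℓ i = 1) :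
    (cycleGraph n ℓ hpos).Jac ≃+
      AddSubgroup.closure (Set.range fun i => ((ℓ i : ℝ) : AddCircle (1 : ℝ))) :=
  (jacAddEquivRange (G := cycleGraph n ℓ hpos) (circlePairing ℓ) (jacRel_eq hsum)).trans
    (AddEquiv.addSubgroupCongr (range_circlePairing ℓ))

theorem ker_circlePairing_eq_ker_subLastHom (hsum : ∑ i, ℓ i = 1)
    (hli : LinearIndependent ℚ ℓ) :
    (circlePairing ℓ).ker = (Fin.subLastHom n ℤ).ker := by
  ext α
  rw [mem_ker_circlePairing_iff_of_linearIndependent hsum hli, Fin.mem_ker_subLastHom]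

noncomputable def jacAddEquivPi (hsum : ∑ i, ℓ i = 1) (hli : LinearIndependent ℚ ℓ) :
    (cycleGraph n ℓ hpos).Jac ≃+ (Fin n → ℤ) :=
  jacAddEquivOfSurjective (G := cycleGraph n ℓ hpos) (Fin.subLastHom n ℤ)
    ((jacRel_eq hsum).trans (ker_circlePairing_eq_ker_subLastHom hsum hli))
    (Fin.subLastHom_surjective n ℤ)

end cycleGraph

/-- For the weighted cycle graph with edge lengths `ℓ₀,…,ℓ_n`
summing to `1`: `J(G) ≅ (ℤℓ₀ + ⋯ + ℤℓ_n)/ℤ ⊆ ℝ/ℤ`; if all lengths are rational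
then `J(G)` is finite; and if the lengths are `ℚ`-linearly independent then `J(G)`
is free abelian of rank `n`. -/
theorem jacobian_cycleGraph (n : ℕ) (ℓ : Fin (n + 1) → ℝ) (hpos : ∀ i, 0 < ℓ i)
    (hsum : ∑ i, ℓ i = 1) :
    Nonempty ((cycleGraph n ℓ hpos).Jac ≃+
      (AddSubgroup.closure (Set.range fun i => ((ℓ i : ℝ) : AddCircle (1 : ℝ))))) ∧
    ((∀ i, ∃ q : ℚ, ℓ i = q) → Finite (cycleGraph n ℓ hpos).Jac) ∧
    (LinearIndependent ℚ ℓ → Nonempty ((cycleGraph n ℓ hpos).Jac ≃+ (Fin n → ℤ))) := by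
  refine ⟨⟨cycleGraph.jacAddEquivClosure hsum⟩, fun hrat => ?_,
    fun hli => ⟨cycleGraph.jacAddEquivPi hsum hli⟩⟩
  choose q hq using hrat
  have : Finite (AddSubgroup.closure (Set.range fun i => ((ℓ i : ℝ) : AddCircle (1 : ℝ)))) := by
    refine AddSubgroup.finite_closure_of_isOfFinAddOrder ?_
    rintro _ ⟨i, rfl⟩
    exact AddCircle.isOfFinAddOrder_iff_exists_rat_eq_div.mpr ⟨q i, by rw [hq i, div_one]⟩
  exact Finite.of_equiv _ (cycleGraph.jacAddEquivClosure hsum).symm.toEquiv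
end

section
/- Let G₂ be a refinement of a finite connected weighted graph G₁ (obtained by length-preserving subdivision of edges). Then the refinement homomorphism r: C_1(G₁,ℝ) → C_1(G₂,ℝ) restricts to an isomorphism H_1(G₁,ℝ) ≅ H_1(G₂,ℝ) that maps H_1(G₁,ℤ) onto H_1(G₂,ℤ), and r(im(d₁)_ℤ) ⊆ im(d₂)_ℤ. -/
namespace WGraph

/-- A refinement of `G₁`: the graph `G₂` is obtained from `G₁` by subdividing each
edge `e` into `n e` consecutive edges, in a length-preserving and
orientation-compatible manner. -/
structure Refinement (G₁ G₂ : WGraph) where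
  /-- the injection on vertices -/
  a : G₁.V → G₂.V
  ainj : Function.Injective a
  /-- the surjection on edges, sending a subdivision edge to the edge it subdivides -/
  b : G₂.E → G₁.E
  /-- the number of subdivision edges of each edge -/
  n : G₁.E → ℕ
  npos : ∀ e, 0 < n e
  /-- the vertices along the subdivision of `e` -/
  vtx : (e : G₁.E) → Fin (n e + 1) → G₂.V
  /-- the subdivision edges of `e`, in order -/
  ed : (e : G₁.E) → Fin (n e) → G₂.E
  /-- every edge of `G₂` is a subdivision edge of exactly one edge of `G₁`, exactly once -/
  ed_bij : Function.Bijective (fun p : Σ e : G₁.E, Fin (n e) => ed p.1 p.2)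
  b_ed : ∀ e i, b (ed e i) = e
  /-- subdividing preserves lengths -/
  len_sum : ∀ e, ∑ i, G₂.len (ed e i) = G₁.len e
  vtx_zero : ∀ e, vtx e 0 = a (G₁.tail e)
  vtx_last : ∀ e, vtx e (Fin.last (n e)) = a (G₁.head e)
  tail_ed : ∀ e i, G₂.tail (ed e i) = vtx e i.castSucc
  head_ed : ∀ e i, G₂.head (ed e i) = vtx e i.succ
  /-- interior subdivision vertices are new vertices -/
  vtx_fresh : ∀ e (i : Fin (n e + 1)), i ≠ 0 → i ≠ Fin.last (n e) → ∀ x, vtx e i ≠ a x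
  /-- interior subdivision vertices of (possibly different) edges are pairwise distinct -/
  vtx_inj : ∀ e e' (i : Fin (n e + 1)) (i' : Fin (n e' + 1)),
    i ≠ 0 → i ≠ Fin.last (n e) → i' ≠ 0 → i' ≠ Fin.last (n e') →
    vtx e i = vtx e' i' → e = e' ∧ (i : ℕ) = (i' : ℕ)
  /-- every vertex of `G₂` is an old vertex or an interior subdivision vertex -/
  vtx_surj : ∀ v : G₂.V, (∃ x, v = a x) ∨ ∃ e i, v = vtx e i

/-- The refinement homomorphism `r : C_1(G₁,A) → C_1(G₂,A)` sending each edge to the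
sum of its subdivision edges; as a function on edges, `r(α)(e') = α(b(e'))`. -/
def Refinement.r {G₁ G₂ : WGraph} (R : Refinement G₁ G₂) {A : Type*} (α : G₁.E → A) :
    G₂.E → A := fun e' => α (R.b e')

end WGraph

/-
Subdividing an edge only creates vertices with exactly one incoming and one outgoing edge, both on
the same path. At such a vertex `d*β = 0` says that `β` takes the same value on the two edges, so
the cycles of `G₂` are the chains constant along every subdivided edge, i.e. the image of `r`. At
an old vertex `d*(r α)` only sees the first and last edge of each path, where `r α` takes the
values of `α`, so `d*(r α)` restricts to `d*α`. This works over any coefficient group. Finally a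
function `f` on the vertices of `G₁`, interpolated linearly in arc length along each subdivided
edge, is a function `g` on the vertices of `G₂` with `d g = r (d f)`.
-/

namespace WGraph

/-- `d*` with coefficients in an arbitrary abelian group; `dStar` and `dStarZ` are its instances
over `ℝ` and `ℤ`. -/
def boundary (G : WGraph) {A : Type*} [AddCommGroup A] (β : G.E → A) (x : G.V) : A :=
  (∑ e ∈ Finset.univ.filter fun e => G.head e = x, β e) -
    ∑ e ∈ Finset.univ.filter fun e => G.tail e = x, β e

namespace Refinement

open Finset

variable {G₁ G₂ : WGraph} (R : Refinement G₁ G₂)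

lemma b_surjective : Function.Surjective R.b :=
  fun e => ⟨R.ed e ⟨0, R.npos e⟩, R.b_ed e _⟩

lemma r_ed {A : Type*} (α : G₁.E → A) (e : G₁.E) (i : Fin (R.n e)) : R.r α (R.ed e i) = α e :=
  congrArg α (R.b_ed e i)

lemma sum_eq_sum_ed {M : Type*} [AddCommMonoid M] (β : G₂.E → M) :
    ∑ e₂, β e₂ = ∑ e, ∑ i, β (R.ed e i) := by
  rw [← Fintype.sum_bijective _ R.ed_bij _ _ fun _ => rfl, Fintype.sum_sigma]

lemma vtx_succ_eq_a_iff (e : G₁.E) (i : Fin (R.n e)) (x : G₁.V) :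
    R.vtx e i.succ = R.a x ↔ i.succ = Fin.last (R.n e) ∧ G₁.head e = x := by
  constructor
  · intro h
    have hlast : i.succ = Fin.last (R.n e) := by
      by_contra hl
      exact R.vtx_fresh e i.succ i.succ_ne_zero hl x h
    refine ⟨hlast, R.ainj ?_⟩
    rw [← R.vtx_last, ← hlast, h]
  · rintro ⟨hlast, rfl⟩
    rw [hlast, R.vtx_last]

lemma vtx_castSucc_eq_a_iff (e : G₁.E) (i : Fin (R.n e)) (x : G₁.V) :
    R.vtx e i.castSucc = R.a x ↔ i.castSucc = 0 ∧ G₁.tail e = x := by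
  constructor
  · intro h
    have hzero : i.castSucc = 0 := by
      by_contra h0
      exact R.vtx_fresh e i.castSucc h0 i.castSucc_lt_last.ne x h
    refine ⟨hzero, R.ainj ?_⟩
    rw [← R.vtx_zero, ← hzero, h]
  · rintro ⟨hzero, rfl⟩
    rw [hzero, R.vtx_zero]

lemma sum_head_eq_a_r {M : Type*} [AddCommMonoid M] (α : G₁.E → M) (x : G₁.V) :
    ∑ e₂ ∈ univ.filter (fun e₂ => G₂.head e₂ = R.a x), R.r α e₂ =
      ∑ e ∈ univ.filter (fun e => G₁.head e = x), α e := by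
  rw [sum_filter, sum_filter, R.sum_eq_sum_ed]
  refine sum_congr rfl fun e _ => ?_
  have hn := R.npos e
  simp only [R.head_ed, R.vtx_succ_eq_a_iff, R.r_ed, ite_and]
  rw [Fintype.sum_eq_single ⟨R.n e - 1, by omega⟩]
  · rw [if_pos (Fin.ext (by simp; omega))]
  · intro i hi
    have hval : (i : ℕ) + 1 ≠ R.n e := fun h => hi (Fin.ext (by simp; omega))
    rw [if_neg (fun h => hval (by simpa using congrArg Fin.val h))]

lemma sum_tail_eq_a_r {M : Type*} [AddCommMonoid M] (α : G₁.E → M) (x : G₁.V) :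
    ∑ e₂ ∈ univ.filter (fun e₂ => G₂.tail e₂ = R.a x), R.r α e₂ =
      ∑ e ∈ univ.filter (fun e => G₁.tail e = x), α e := by
  rw [sum_filter, sum_filter, R.sum_eq_sum_ed]
  refine sum_congr rfl fun e _ => ?_
  simp only [R.tail_ed, R.vtx_castSucc_eq_a_iff, R.r_ed, ite_and]
  rw [Fintype.sum_eq_single ⟨0, R.npos e⟩]
  · exact if_pos rfl
  · intro i hi
    rw [if_neg (fun h => hi (Fin.ext (by simpa using congrArg Fin.val h)))]

lemma boundary_r_a {A : Type*} [AddCommGroup A] (α : G₁.E → A) (x : G₁.V) :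
    G₂.boundary (R.r α) (R.a x) = G₁.boundary α x := by
  rw [boundary, boundary, R.sum_head_eq_a_r, R.sum_tail_eq_a_r]

lemma eq_of_vtx_eq_interior {e e₀ : G₁.E} {k : Fin (R.n e + 1)} {k₀ : Fin (R.n e₀ + 1)}
    (h0 : k₀ ≠ 0) (hlast : k₀ ≠ Fin.last (R.n e₀)) (h : R.vtx e k = R.vtx e₀ k₀) :
    e = e₀ ∧ (k : ℕ) = k₀ := by
  have hk0 : k ≠ 0 := by
    rintro rfl
    exact R.vtx_fresh e₀ k₀ h0 hlast _ (h.symm.trans (R.vtx_zero e))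
  have hklast : k ≠ Fin.last (R.n e) := by
    rintro rfl
    exact R.vtx_fresh e₀ k₀ h0 hlast _ (h.symm.trans (R.vtx_last e))
  exact R.vtx_inj e e₀ k k₀ hk0 hklast h0 hlast h

lemma filter_head_eq_vtx_succ (e : G₁.E) (i : Fin (R.n e)) (h : (i : ℕ) + 1 < R.n e) :
    univ.filter (fun e₂ => G₂.head e₂ = R.vtx e i.succ) = {R.ed e i} := by
  ext e₂
  obtain ⟨⟨e', j⟩, rfl⟩ := R.ed_bij.surjective e₂
  simp only [mem_filter, mem_univ, true_and, mem_singleton, R.head_ed]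
  refine ⟨fun hv => ?_, fun hed => by rw [← R.head_ed, hed, R.head_ed]⟩
  obtain ⟨rfl, hval⟩ := R.eq_of_vtx_eq_interior i.succ_ne_zero
    (fun hl => by simp [Fin.ext_iff] at hl; omega) hv
  exact congrArg (R.ed e') (Fin.ext (by simpa using hval))

lemma filter_tail_eq_vtx_succ (e : G₁.E) (i : Fin (R.n e)) (h : (i : ℕ) + 1 < R.n e) :
    univ.filter (fun e₂ => G₂.tail e₂ = R.vtx e i.succ) = {R.ed e ⟨i + 1, h⟩} := by
  ext e₂
  obtain ⟨⟨e', j⟩, rfl⟩ := R.ed_bij.surjective e₂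
  simp only [mem_filter, mem_univ, true_and, mem_singleton, R.tail_ed]
  refine ⟨fun hv => ?_, fun hed => by rw [← R.tail_ed, hed, R.tail_ed]; rfl⟩
  obtain ⟨rfl, hval⟩ := R.eq_of_vtx_eq_interior i.succ_ne_zero
    (fun hl => by simp [Fin.ext_iff] at hl; omega) hv
  exact congrArg (R.ed e') (Fin.ext (by simpa using hval))

lemma boundary_vtx_succ {A : Type*} [AddCommGroup A] (β : G₂.E → A) (e : G₁.E) (i : Fin (R.n e))
    (h : (i : ℕ) + 1 < R.n e) :
    G₂.boundary β (R.vtx e i.succ) = β (R.ed e i) - β (R.ed e ⟨i + 1, h⟩) := by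
  rw [boundary, R.filter_head_eq_vtx_succ e i h, R.filter_tail_eq_vtx_succ e i h, sum_singleton,
    sum_singleton]

section Cycles

variable {A : Type*} [AddCommGroup A]

lemma boundary_r_eq_zero_iff (α : G₁.E → A) :
    (∀ v, G₂.boundary (R.r α) v = 0) ↔ ∀ x, G₁.boundary α x = 0 := by
  refine ⟨fun h x => R.boundary_r_a α x ▸ h (R.a x), fun h v => ?_⟩
  rcases R.vtx_surj v with ⟨x, rfl⟩ | ⟨e, i, rfl⟩
  · rw [R.boundary_r_a, h]
  induction i using Fin.cases with
  | zero => rw [R.vtx_zero, R.boundary_r_a, h]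
  | succ i =>
    by_cases hlast : i.succ = Fin.last (R.n e)
    · rw [hlast, R.vtx_last, R.boundary_r_a, h]
    · have hi : (i : ℕ) + 1 < R.n e := by simp [Fin.ext_iff] at hlast; omega
      rw [R.boundary_vtx_succ _ e i hi, R.r_ed, R.r_ed, sub_self]

lemma apply_ed_eq_of_boundary_eq_zero {β : G₂.E → A} (hβ : ∀ v, G₂.boundary β v = 0)
    (e : G₁.E) (k : ℕ) (hk : k < R.n e) : β (R.ed e ⟨k, hk⟩) = β (R.ed e ⟨0, R.npos e⟩) := by
  induction k with
  | zero => rfl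
  | succ k ih =>
    have hstep := hβ (R.vtx e (Fin.succ ⟨k, by omega⟩))
    rw [R.boundary_vtx_succ β e _ hk, sub_eq_zero] at hstep
    rw [← hstep, ih]

lemma exists_r_eq_of_boundary_eq_zero {β : G₂.E → A} (hβ : ∀ v, G₂.boundary β v = 0) :
    ∃ α : G₁.E → A, (∀ x, G₁.boundary α x = 0) ∧ R.r α = β := by
  have hr : R.r (fun e => β (R.ed e ⟨0, R.npos e⟩)) = β := by
    funext e₂
    obtain ⟨⟨e, i⟩, rfl⟩ := R.ed_bij.surjective e₂
    rw [R.r_ed]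
    exact (R.apply_ed_eq_of_boundary_eq_zero hβ e i i.isLt).symm
  rw [← hr] at hβ
  exact ⟨_, (R.boundary_r_eq_zero_iff _).mp hβ, hr⟩

end Cycles

section Potential

noncomputable def arcLen (e : G₁.E) (k : Fin (R.n e + 1)) : ℝ :=
  Fin.partialSum (fun i => G₂.len (R.ed e i)) k

lemma arcLen_succ (e : G₁.E) (i : Fin (R.n e)) :
    R.arcLen e i.succ = R.arcLen e i.castSucc + G₂.len (R.ed e i) :=
  Fin.partialSum_succ _ i

lemma arcLen_last (e : G₁.E) : R.arcLen e (Fin.last (R.n e)) = G₁.len e := by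
  rw [arcLen, Fin.partialSum, Fin.val_last, List.take_of_length_le (by simp), List.sum_ofFn,
    R.len_sum]

def point : G₁.V ⊕ (Σ e : G₁.E, Fin (R.n e + 1)) → G₂.V :=
  Sum.elim R.a fun p => R.vtx p.1 p.2

noncomputable def interpolate (f : G₁.V → ℝ) : G₁.V ⊕ (Σ e : G₁.E, Fin (R.n e + 1)) → ℝ :=
  Sum.elim f fun p => f (G₁.tail p.1) + G₁.d f p.1 * R.arcLen p.1 p.2

lemma interpolate_of_point_eq_a (f : G₁.V → ℝ) {p : G₁.V ⊕ (Σ e : G₁.E, Fin (R.n e + 1))}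
    {x : G₁.V} (h : R.point p = R.a x) : R.interpolate f p = f x := by
  rcases p with y | ⟨e, k⟩
  · rw [R.ainj h]; rfl
  change R.vtx e k = R.a x at h
  change f (G₁.tail e) + G₁.d f e * R.arcLen e k = f x
  by_cases h0 : k = 0
  · subst h0
    rw [R.vtx_zero] at h
    simp [R.ainj h, arcLen]
  by_cases hlast : k = Fin.last (R.n e)
  · subst hlast
    rw [R.vtx_last] at h
    rw [R.arcLen_last, d, div_mul_cancel₀ _ (G₁.len_pos e).ne', ← R.ainj h]
    ring
  exact absurd h (R.vtx_fresh e k h0 hlast x)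

lemma point_eq_a_or_interior (p : G₁.V ⊕ (Σ e : G₁.E, Fin (R.n e + 1))) :
    (∃ x, R.point p = R.a x) ∨
      ∃ e k, p = .inr ⟨e, k⟩ ∧ k ≠ 0 ∧ k ≠ Fin.last (R.n e) := by
  rcases p with x | ⟨e, k⟩
  · exact .inl ⟨x, rfl⟩
  by_cases h0 : k = 0
  · exact .inl ⟨G₁.tail e, by subst h0; exact R.vtx_zero e⟩
  by_cases hlast : k = Fin.last (R.n e)
  · exact .inl ⟨G₁.head e, by subst hlast; exact R.vtx_last e⟩
  exact .inr ⟨e, k, rfl, h0, hlast⟩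

lemma interpolate_factorsThrough (f : G₁.V → ℝ) : (R.interpolate f).FactorsThrough R.point := by
  intro p q hpq
  rcases R.point_eq_a_or_interior p with ⟨x, hx⟩ | ⟨e, k, rfl, hk0, hklast⟩
  · rw [R.interpolate_of_point_eq_a f hx, R.interpolate_of_point_eq_a f (hpq ▸ hx)]
  rcases R.point_eq_a_or_interior q with ⟨x, hx⟩ | ⟨e', k', rfl, -, -⟩
  · exact absurd (hpq.trans hx) (R.vtx_fresh e k hk0 hklast x)
  obtain ⟨rfl, hval⟩ := R.eq_of_vtx_eq_interior hk0 hklast hpq.symm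
  obtain rfl : k' = k := Fin.ext hval
  rfl

/-- The default value `0` off the range of `point` is never taken, by `vtx_surj`. -/
noncomputable def refinePotential (f : G₁.V → ℝ) : G₂.V → ℝ :=
  Function.extend R.point (R.interpolate f) 0

lemma refinePotential_vtx (f : G₁.V → ℝ) (e : G₁.E) (k : Fin (R.n e + 1)) :
    R.refinePotential f (R.vtx e k) = f (G₁.tail e) + G₁.d f e * R.arcLen e k :=
  (R.interpolate_factorsThrough f).extend_apply 0 (.inr ⟨e, k⟩)

lemma d_refinePotential (f : G₁.V → ℝ) : G₂.d (R.refinePotential f) = R.r (G₁.d f) := by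
  funext e₂
  obtain ⟨⟨e, i⟩, rfl⟩ := R.ed_bij.surjective e₂
  have hlen := (G₂.len_pos (R.ed e i)).ne'
  rw [R.r_ed, d, R.head_ed, R.tail_ed, R.refinePotential_vtx, R.refinePotential_vtx,
    R.arcLen_succ]
  field_simp
  ring

lemma isExactZ_r {α : G₁.E → ℤ} (hα : G₁.IsExactZ α) : G₂.IsExactZ (R.r α) := by
  obtain ⟨f, hf⟩ := hα
  exact ⟨R.refinePotential f, fun e₂ => by rw [R.d_refinePotential]; exact hf (R.b e₂)⟩

end Potential

end Refinement

end WGraph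

theorem refinement_homology_general (G₁ G₂ : WGraph)
    (R : WGraph.Refinement G₁ G₂) :
    Function.Injective (fun α : G₁.E → ℝ => R.r α) ∧
    (∀ α : G₁.E → ℝ, G₁.IsCycle α ↔ G₂.IsCycle (R.r α)) ∧
    (∀ β : G₂.E → ℝ, G₂.IsCycle β → ∃ α : G₁.E → ℝ, G₁.IsCycle α ∧ R.r α = β) ∧
    (∀ α : G₁.E → ℤ, G₁.IsCycleZ α ↔ G₂.IsCycleZ (R.r α)) ∧
    (∀ β : G₂.E → ℤ, G₂.IsCycleZ β → ∃ α : G₁.E → ℤ, G₁.IsCycleZ α ∧ R.r α = β) ∧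
    (∀ α : G₁.E → ℤ, G₁.IsExactZ α → G₂.IsExactZ (R.r α)) := by
  exact ⟨R.b_surjective.injective_comp_right,
    fun α => (R.boundary_r_eq_zero_iff α).symm,
    fun _ hβ => R.exists_r_eq_of_boundary_eq_zero hβ,
    fun α => (R.boundary_r_eq_zero_iff α).symm,
    fun _ hβ => R.exists_r_eq_of_boundary_eq_zero hβ,
    fun _ => R.isExactZ_r⟩

/-- The refinement homomorphism `r` is injective, induces an
isomorphism `H₁(G₁,ℝ) ≅ H₁(G₂,ℝ)` mapping `H₁(G₁,ℤ)` onto `H₁(G₂,ℤ)`, and maps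
`im(d₁)_ℤ` into `im(d₂)_ℤ`. -/
theorem refinement_homology (G₁ G₂ : WGraph) (hG₁ : G₁.Connected)
    (R : WGraph.Refinement G₁ G₂) :
    Function.Injective (fun α : G₁.E → ℝ => R.r α) ∧
    (∀ α : G₁.E → ℝ, G₁.IsCycle α ↔ G₂.IsCycle (R.r α)) ∧
    (∀ β : G₂.E → ℝ, G₂.IsCycle β → ∃ α : G₁.E → ℝ, G₁.IsCycle α ∧ R.r α = β) ∧
    (∀ α : G₁.E → ℤ, G₁.IsCycleZ α ↔ G₂.IsCycleZ (R.r α)) ∧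
    (∀ β : G₂.E → ℤ, G₂.IsCycleZ β → ∃ α : G₁.E → ℤ, G₁.IsCycleZ α ∧ R.r α = β) ∧
    (∀ α : G₁.E → ℤ, G₁.IsExactZ α → G₂.IsExactZ (R.r α)) :=
  refinement_homology_general G₁ G₂ R
end
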